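/- arXiv:1702.01691 — 8 statements merged into one kernel-verified Lean document; each statement's English description precedes it below -/
import Mathlib

section
/- Let X be a nonempty finite type, p_data a probability distribution on X, and K : (X → ℝ) → ℝ a convex function differentiable at p_data; write ∂K/∂p(x) for the Fréchet derivative of K at p_data applied to the x-th coordinate basis vector. Fix λ ∈ ℝ and μ : X → ℝ with μ(x) = 0 whenever p_data(x) > 0 and μ(x) ≥ 0 whenever p_data(x) = 0, and define c*(x) = −∂K/∂p(x)|_{p=p_data} − λ + μ(x). Then (p_data, c*) is a saddle point of the minimax objective L(p, c) = ∑_x p(x)·c(x) − ∑_x p_data(x)·c(x) + K(p) over probability distributions p and arbitrary cost functions c : X → ℝ; that is, for every cost function c : X → ℝ one has L(p_data, c) = K(p_data), and for every probability distribution p on X one has L(p, c*) ≥ K(p_data) = L(p_data, c*). -/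
/-!
The first claim holds because the two expectations of `c` cancel. For the second, write
`v = p - p_data`. Since `p` and `p_data` both have total mass one, `λ` drops out, and since `μ`
vanishes on the support of `p_data`,
`E_p[c*] - E_{p_data}[c*] = -DK(v) + E_p[μ]`, where `E_p[μ] ≥ 0`.
The gradient inequality for the convex function `K` gives `DK(v) ≤ K(p) - K(p_data)`.
-/

open Finset

theorem ConvexOn.le_sub_of_hasFDerivAt {E : Type*} [NormedAddCommGroup E] [NormedSpace ℝ E]
    {s : Set E} {f : E → ℝ} {f' : E →L[ℝ] ℝ} {x y : E} (hf : ConvexOn ℝ s f)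
    (hx : x ∈ s) (hy : y ∈ s) (hf' : HasFDerivAt f f' x) :
    f' (y - x) ≤ f y - f x := by
  set g := AffineMap.lineMap (k := ℝ) x y
  have hg : HasDerivAt (f ∘ g) (f' (y - x)) 0 := by
    have hline : HasDerivAt g (y - x) 0 := by
      simpa using AffineMap.hasDerivAt_lineMap (a := x) (b := y) (x := (0 : ℝ))
    exact (by simpa [g] using hf' : HasFDerivAt f f' (g 0)).comp_hasDerivAt 0 hline
  simpa [g, slope_def_field] using
    (hf.comp_affineMap g).le_slope_of_hasDerivAt (by simpa [g]) (by simpa [g]) zero_lt_one hg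

theorem ContinuousLinearMap.sum_mul_apply_single {X : Type*} [Fintype X] [DecidableEq X]
    (D : (X → ℝ) →L[ℝ] ℝ) (v : X → ℝ) : ∑ x, v x * D (Pi.single x 1) = D v := by
  conv_rhs => rw [← Finset.univ_sum_single v, map_sum]
  refine Finset.sum_congr rfl fun x _ => ?_
  rw [← smul_eq_mul, ← map_smul, ← Pi.single_smul, smul_eq_mul, mul_one]

theorem sum_mul_sub_sum_mul_eq_of_eq_neg_sub_add {X : Type*} [Fintype X] [DecidableEq X]
    (D : (X → ℝ) →L[ℝ] ℝ) (lam : ℝ) (mu c p q : X → ℝ)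
    (hc : ∀ x, c x = -(D (Pi.single x 1)) - lam + mu x) :
    (∑ x, p x * c x) - ∑ x, q x * c x
      = -D (p - q) - lam * ((∑ x, p x) - ∑ x, q x) + ((∑ x, p x * mu x) - ∑ x, q x * mu x) := by
  rw [← D.sum_mul_apply_single]
  simp only [hc, Pi.sub_apply, mul_sub, mul_add, sub_mul, sum_sub_distrib, sum_add_distrib,
    ← sum_mul, mul_neg, sum_neg_distrib]
  ring

theorem saddle_point_adversarial_objective_general
    {X : Type*} [Fintype X] [DecidableEq X]
    (p_data : X → ℝ)
    (hp_data_nonneg : ∀ x, 0 ≤ p_data x)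
    (hp_data_sum : ∑ x, p_data x = 1)
    (K : (X → ℝ) → ℝ) (D : (X → ℝ) →L[ℝ] ℝ)
    (hK_conv : ConvexOn ℝ Set.univ K)
    (hK : HasFDerivAt K D p_data)
    (lam : ℝ) (mu : X → ℝ)
    (hmu_supp : ∀ x, 0 < p_data x → mu x = 0)
    (hmu_nonneg : ∀ x, p_data x = 0 → 0 ≤ mu x)
    (cstar : X → ℝ)
    (hcstar : ∀ x, cstar x = -(D (Pi.single x 1)) - lam + mu x) :
    (∀ c : X → ℝ,
      (∑ x, p_data x * c x) - (∑ x, p_data x * c x) + K p_data = K p_data) ∧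
    (∀ p : X → ℝ, (∀ x, 0 ≤ p x) → (∑ x, p x = 1) →
      K p_data ≤ (∑ x, p x * cstar x) - (∑ x, p_data x * cstar x) + K p) := by
  refine ⟨fun c => by ring, fun p hp hp_sum => ?_⟩
  have hmu : ∀ x, 0 ≤ mu x := fun x => (hp_data_nonneg x).lt_or_eq.elim
    (fun h => (hmu_supp x h).ge) (fun h => hmu_nonneg x h.symm)
  have hslack : ∑ x, p_data x * mu x = 0 := sum_eq_zero fun x _ =>
    (hp_data_nonneg x).lt_or_eq.elim (fun h => by rw [hmu_supp x h, mul_zero])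
      (fun h => by rw [← h, zero_mul])
  have hp_mu : 0 ≤ ∑ x, p x * mu x := sum_nonneg fun x _ => mul_nonneg (hp x) (hmu x)
  have hgrad : D (p - p_data) ≤ K p - K p_data :=
    hK_conv.le_sub_of_hasFDerivAt trivial trivial hK
  rw [sum_mul_sub_sum_mul_eq_of_eq_neg_sub_add D lam mu cstar p p_data hcstar, hp_sum,
    hp_data_sum, hslack]
  linarith

/-- `(p_data, c*)` is a saddle point of the minimax objective
`L(p, c) = ∑ p(x)c(x) - ∑ p_data(x)c(x) + K(p)`: for every cost `c`,
`L(p_data, c) = K(p_data)`, and for every probability distribution `p`,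
`L(p, c*) ≥ K(p_data) = L(p_data, c*)`. -/
theorem saddle_point_adversarial_objective
    {X : Type*} [Fintype X] [Nonempty X] [DecidableEq X]
    (p_data : X → ℝ)
    (hp_data_nonneg : ∀ x, 0 ≤ p_data x)
    (hp_data_sum : ∑ x, p_data x = 1)
    (K : (X → ℝ) → ℝ) (D : (X → ℝ) →L[ℝ] ℝ)
    (hK_conv : ConvexOn ℝ Set.univ K)
    (hK : HasFDerivAt K D p_data)
    (lam : ℝ) (mu : X → ℝ)
    (hmu_supp : ∀ x, 0 < p_data x → mu x = 0)
    (hmu_nonneg : ∀ x, p_data x = 0 → 0 ≤ mu x)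
    (cstar : X → ℝ)
    (hcstar : ∀ x, cstar x = -(D (Pi.single x 1)) - lam + mu x) :
    (∀ c : X → ℝ,
      (∑ x, p_data x * c x) - (∑ x, p_data x * c x) + K p_data = K p_data) ∧
    (∀ p : X → ℝ, (∀ x, 0 ≤ p x) → (∑ x, p x = 1) →
      K p_data ≤ (∑ x, p x * cstar x) - (∑ x, p_data x * cstar x) + K p) :=
  saddle_point_adversarial_objective_general p_data hp_data_nonneg hp_data_sum K D hK_conv hK lam mu
    hmu_supp hmu_nonneg cstar hcstar
end

section
/- Let X be a nonempty finite type, p_data a probability distribution on X, and K : (X → ℝ) → ℝ a convex function differentiable at p_data. Then strong duality holds for the problem min K(p) over probability distributions p subject to p = p_data: the supremum over all functions c : X → ℝ of (infimum over probability distributions p on X of ∑_x c(x)·(p(x) − p_data(x)) + K(p)) equals K(p_data), and this supremum is attained at the function c(x) = −∂K/∂p(x)|_{p=p_data}, where ∂K/∂p(x) is the Fréchet derivative of K at p_data applied to the x-th coordinate basis vector. -/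
/-!
For a convex function differentiable at `p_data`, the gradient inequality
`K p ≥ K p_data + D (p - p_data)` says that the multiplier `c = -∇K(p_data)` makes `p_data` a
minimiser of the Lagrangian `p ↦ ∑ c x (p x - p_data x) + K p` over the simplex, while
`p = p_data` gives every Lagrangian the value `K p_data`. So `(-∇K(p_data), p_data)` is a saddle
point and the max–min value is `K p_data`. The inner infima are not junk values because a convex
function on `ℝ^X` is continuous, hence each Lagrangian is bounded below on the compact simplex.
-/

open Set

theorem ConvexOn.add_apply_sub_le_of_hasFDerivAt {E : Type*} [NormedAddCommGroup E]
    [NormedSpace ℝ E] {s : Set E} {f : E → ℝ} {f' : E →L[ℝ] ℝ} {a y : E}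
    (hf : ConvexOn ℝ s f) (ha : a ∈ s) (hy : y ∈ s) (hf' : HasFDerivAt f f' a) :
    f a + f' (y - a) ≤ f y := by
  let ℓ : ℝ →ᵃ[ℝ] E := AffineMap.lineMap a y
  have hconv : ConvexOn ℝ (ℓ ⁻¹' s) (f ∘ ℓ) := hf.comp_affineMap ℓ
  have hderiv : HasDerivAt (f ∘ ℓ) (f' (y - a)) 0 :=
    hf'.comp_hasDerivAt_of_eq (0 : ℝ) AffineMap.hasDerivAt_lineMap
      (AffineMap.lineMap_apply_zero a y).symm
  have hℓ0 : ℓ 0 = a := AffineMap.lineMap_apply_zero a y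
  have hℓ1 : ℓ 1 = y := AffineMap.lineMap_apply_one a y
  have hslope := hconv.le_slope_of_hasDerivAt (x := 0) (y := 1) (by simpa [hℓ0]) (by simpa [hℓ1])
    one_pos hderiv
  simp only [slope_def_field, Function.comp_apply, hℓ0, hℓ1, sub_zero, div_one] at hslope
  linarith

theorem ContinuousLinearMap.sum_apply_single_mul {ι : Type*} [Fintype ι] [DecidableEq ι]
    (f : (ι → ℝ) →L[ℝ] ℝ) (v : ι → ℝ) : ∑ i, f (Pi.single i 1) * v i = f v := by
  conv_rhs => rw [← Finset.univ_sum_single v, map_sum]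
  refine Finset.sum_congr rfl fun i _ => ?_
  rw [mul_comm, ← smul_eq_mul, ← map_smul, ← Pi.single_smul', smul_eq_mul, mul_one]

theorem ciSup_ciInf_eq_of_saddlePoint {ι α β : Type*} [ConditionallyCompleteLattice β]
    {L : ι → α → β} {v : β} {c₀ : ι} {p₀ : α} (hp₀ : ∀ c, L c p₀ = v) (hc₀ : ∀ p, v ≤ L c₀ p)
    (hbdd : ∀ c, BddBelow (range (L c))) :
    (⨆ c, ⨅ p, L c p) = v ∧ ⨅ p, L c₀ p = v := by
  have : Nonempty ι := ⟨c₀⟩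
  have : Nonempty α := ⟨p₀⟩
  have hle : ∀ c, ⨅ p, L c p ≤ v := fun c => hp₀ c ▸ ciInf_le (hbdd c) p₀
  have hc₀_eq : ⨅ p, L c₀ p = v := le_antisymm (hle c₀) (le_ciInf hc₀)
  refine ⟨le_antisymm (ciSup_le hle) ?_, hc₀_eq⟩
  exact hc₀_eq ▸ le_ciSup ⟨v, forall_mem_range.2 hle⟩ c₀

theorem Continuous.bddBelow_range_stdSimplex {ι : Type*} [Fintype ι] {f : (ι → ℝ) → ℝ}
    (hf : Continuous f) : BddBelow (range fun p : stdSimplex ℝ ι => f p) :=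
  (isCompact_range (hf.comp continuous_subtype_val)).bddBelow

theorem strong_duality_adversarial_general
    {X : Type*} [Fintype X] [DecidableEq X]
    (p_data : X → ℝ)
    (hp_data_nonneg : ∀ x, 0 ≤ p_data x)
    (hp_data_sum : ∑ x, p_data x = 1)
    (K : (X → ℝ) → ℝ) (D : (X → ℝ) →L[ℝ] ℝ)
    (hK_conv : ConvexOn ℝ Set.univ K)
    (hK : HasFDerivAt K D p_data) :
    (⨆ c : X → ℝ,
        ⨅ p : {p : X → ℝ // (∀ x, 0 ≤ p x) ∧ ∑ x, p x = 1},
          (∑ x, c x * (p.1 x - p_data x)) + K p.1) = K p_data ∧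
    (⨅ p : {p : X → ℝ // (∀ x, 0 ≤ p x) ∧ ∑ x, p x = 1},
        (∑ x, (-(D (Pi.single x 1))) * (p.1 x - p_data x)) + K p.1)
      = K p_data := by
  have hK_cont : Continuous K := continuousOn_univ.mp (hK_conv.continuousOn isOpen_univ)
  refine ciSup_ciInf_eq_of_saddlePoint (p₀ := ⟨p_data, hp_data_nonneg, hp_data_sum⟩)
    (fun c => by simp) (fun p => ?_) (fun c => ?_)
  · have hgrad := hK_conv.add_apply_sub_le_of_hasFDerivAt (mem_univ _) (mem_univ p.1) hK
    rw [← D.sum_apply_single_mul] at hgrad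
    simp only [neg_mul, Finset.sum_neg_distrib, Pi.sub_apply] at hgrad ⊢
    linarith
  · exact Continuous.bddBelow_range_stdSimplex
      (f := fun p => ∑ x, c x * (p x - p_data x) + K p) (by fun_prop)

/-- Strong duality for `min K(p)` over probability distributions
subject to `p = p_data`: the supremum over all dual variables `c : X → ℝ` of
the dual function `inf_{p ∈ 𝒫} ∑ c(x)(p(x) - p_data(x)) + K(p)` equals
`K(p_data)`, and the supremum is attained at `c(x) = -∂K/∂p(x)|_{p_data}`. -/
theorem strong_duality_adversarial
    {X : Type*} [Fintype X] [Nonempty X] [DecidableEq X]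
    (p_data : X → ℝ)
    (hp_data_nonneg : ∀ x, 0 ≤ p_data x)
    (hp_data_sum : ∑ x, p_data x = 1)
    (K : (X → ℝ) → ℝ) (D : (X → ℝ) →L[ℝ] ℝ)
    (hK_conv : ConvexOn ℝ Set.univ K)
    (hK : HasFDerivAt K D p_data) :
    (⨆ c : X → ℝ,
        ⨅ p : {p : X → ℝ // (∀ x, 0 ≤ p x) ∧ ∑ x, p x = 1},
          (∑ x, c x * (p.1 x - p_data x)) + K p.1) = K p_data ∧
    (⨅ p : {p : X → ℝ // (∀ x, 0 ≤ p x) ∧ ∑ x, p x = 1},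
        (∑ x, (-(D (Pi.single x 1))) * (p.1 x - p_data x)) + K p.1)
      = K p_data :=
  strong_duality_adversarial_general p_data hp_data_nonneg hp_data_sum K D hK_conv hK
end

section
/- Let X be a nonempty finite type and p_data a probability distribution on X with p_data(x) > 0 for all x. For every function c : X → ℝ, the infimum over probability distributions p on X of ∑_x p(x)·c(x) − ∑_x p_data(x)·c(x) − H(p) is at most −H(p_data), where H(q) = −∑_x q(x)·log q(x) (with 0·log 0 = 0). Consequently, the supremum over c : X → ℝ of this infimum equals −H(p_data), and it is attained at c_ent(x) = −log p_data(x). -/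
lemma aux_sub_one_le_mul_log {x : ℝ} (hx : 0 ≤ x) : x - 1 ≤ x * Real.log x := by
  rcases eq_or_lt_of_le hx with h | h
  · simp [← h]
  · have h1 : Real.log x⁻¹ ≤ x⁻¹ - 1 := Real.log_le_sub_one_of_pos (by positivity)
    rw [Real.log_inv] at h1
    have h2 : 1 - x⁻¹ ≤ Real.log x := by linarith
    have h3 := mul_le_mul_of_nonneg_left h2 hx
    have h4 : x * (1 - x⁻¹) = x - 1 := by field_simp
    linarith

lemma aux_gibbs_term {p q : ℝ} (hp : 0 ≤ p) (hq : 0 < q) :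
    p - q ≤ p * Real.log p - p * Real.log q := by
  rcases eq_or_lt_of_le hp with h | h
  · simp [← h]; linarith
  · have h1 : Real.log (q / p) ≤ q / p - 1 := Real.log_le_sub_one_of_pos (by positivity)
    rw [Real.log_div hq.ne' h.ne'] at h1
    have h2 : 1 - q / p ≤ Real.log p - Real.log q := by linarith
    have h3 := mul_le_mul_of_nonneg_left h2 h.le
    have h4 : p * (1 - q / p) = p - q := by field_simp
    nlinarith

/-- With the negative-entropy regularizer, for every discriminator
`c : X → ℝ` the inner infimum over probability distributions `p` of
`∑ p(x)c(x) - ∑ p_data(x)c(x) - H(p)` is at most `-H(p_data)`; consequently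
the supremum over `c` of this infimum equals `-H(p_data)`, and it is attained
at `c_ent(x) = -log p_data(x)`. -/
theorem entropy_strong_duality
    {X : Type*} [Fintype X] [Nonempty X]
    (p_data : X → ℝ)
    (hp_data_pos : ∀ x, 0 < p_data x)
    (hp_data_sum : ∑ x, p_data x = 1) :
    (∀ c : X → ℝ,
      (⨅ p : {p : X → ℝ // (∀ x, 0 ≤ p x) ∧ ∑ x, p x = 1},
          (∑ x, p.1 x * c x) - (∑ x, p_data x * c x)
            - (-∑ x, p.1 x * Real.log (p.1 x)))
        ≤ -(-∑ x, p_data x * Real.log (p_data x))) ∧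
    (⨆ c : X → ℝ,
        ⨅ p : {p : X → ℝ // (∀ x, 0 ≤ p x) ∧ ∑ x, p x = 1},
          (∑ x, p.1 x * c x) - (∑ x, p_data x * c x)
            - (-∑ x, p.1 x * Real.log (p.1 x)))
      = -(-∑ x, p_data x * Real.log (p_data x)) ∧
    (⨅ p : {p : X → ℝ // (∀ x, 0 ≤ p x) ∧ ∑ x, p x = 1},
        (∑ x, p.1 x * (-Real.log (p_data x)))
          - (∑ x, p_data x * (-Real.log (p_data x)))
          - (-∑ x, p.1 x * Real.log (p.1 x)))
      = -(-∑ x, p_data x * Real.log (p_data x)) := by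
  set S := {p : X → ℝ // (∀ x, 0 ≤ p x) ∧ ∑ x, p x = 1} with hS
  have hSne : Nonempty S := ⟨⟨p_data, fun x => (hp_data_pos x).le, hp_data_sum⟩⟩
  -- boundedness below of the inner objective, for each c
  have hbdd : ∀ c : X → ℝ, BddBelow (Set.range fun p : S =>
      (∑ x, p.1 x * c x) - (∑ x, p_data x * c x)
        - (-∑ x, p.1 x * Real.log (p.1 x))) := by
    intro c
    refine ⟨(∑ x, -|c x|) - (∑ x, p_data x * c x) + (1 - (Fintype.card X : ℝ)), ?_⟩
    rintro _ ⟨p, rfl⟩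
    obtain ⟨hp0, hp1⟩ := p.2
    have hple1 : ∀ x, p.1 x ≤ 1 := by
      intro x
      have h := Finset.single_le_sum (fun i (_ : i ∈ Finset.univ) => hp0 i) (Finset.mem_univ x)
      rw [hp1] at h
      exact h
    have h1 : (∑ x, -|c x|) ≤ ∑ x, p.1 x * c x := by
      apply Finset.sum_le_sum
      intro x _
      have : |p.1 x * c x| ≤ |c x| := by
        rw [abs_mul, abs_of_nonneg (hp0 x)]
        nlinarith [abs_nonneg (c x), hple1 x]
      linarith [neg_abs_le (p.1 x * c x)]
    have h2 : (1 - (Fintype.card X : ℝ)) ≤ ∑ x, p.1 x * Real.log (p.1 x) := by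
      have := Finset.sum_le_sum (fun x (_ : x ∈ Finset.univ) =>
        aux_sub_one_le_mul_log (hp0 x))
      simpa [Finset.sum_sub_distrib, hp1] using this
    simp only
    linarith
  -- part 1: inf ≤ value at p_data
  have claim1 : ∀ c : X → ℝ,
      (⨅ p : S, (∑ x, p.1 x * c x) - (∑ x, p_data x * c x)
          - (-∑ x, p.1 x * Real.log (p.1 x)))
        ≤ -(-∑ x, p_data x * Real.log (p_data x)) := by
    intro c
    have := ciInf_le (hbdd c) (⟨p_data, fun x => (hp_data_pos x).le, hp_data_sum⟩ : S)
    simpa using this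
  -- part 3: at c_ent the inf equals the target
  have claim3 : (⨅ p : S,
        (∑ x, p.1 x * (-Real.log (p_data x)))
          - (∑ x, p_data x * (-Real.log (p_data x)))
          - (-∑ x, p.1 x * Real.log (p.1 x)))
      = -(-∑ x, p_data x * Real.log (p_data x)) := by
    refine le_antisymm (claim1 _) (le_ciInf ?_)
    intro p
    obtain ⟨hp0, hp1⟩ := p.2
    have key : (0 : ℝ) ≤ ∑ x, (p.1 x * Real.log (p.1 x) - p.1 x * Real.log (p_data x)) := by
      have h := Finset.sum_le_sum (fun x (_ : x ∈ Finset.univ) =>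
        aux_gibbs_term (hp0 x) (hp_data_pos x))
      have h0 : ∑ x, (p.1 x - p_data x) = 0 := by
        rw [Finset.sum_sub_distrib, hp1, hp_data_sum]; ring
      linarith [h0 ▸ h]
    have hexp : ∑ x, p.1 x * (-Real.log (p_data x)) = -∑ x, p.1 x * Real.log (p_data x) := by
      simp [Finset.sum_neg_distrib]
    have hexp2 : ∑ x, p_data x * (-Real.log (p_data x))
        = -∑ x, p_data x * Real.log (p_data x) := by
      simp [Finset.sum_neg_distrib]
    rw [Finset.sum_sub_distrib] at key
    simp only [hexp, hexp2]
    linarith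
  refine ⟨claim1, ?_, claim3⟩
  -- part 2
  have hbddA : BddAbove (Set.range fun c : X → ℝ =>
      ⨅ p : S, (∑ x, p.1 x * c x) - (∑ x, p_data x * c x)
        - (-∑ x, p.1 x * Real.log (p.1 x))) := by
    refine ⟨-(-∑ x, p_data x * Real.log (p_data x)), ?_⟩
    rintro _ ⟨c, rfl⟩
    exact claim1 c
  refine le_antisymm (ciSup_le claim1) ?_
  exact le_ciSup_of_le hbddA (fun x => -Real.log (p_data x)) claim3.ge
end

section
/- Let X be a nonempty finite type and p_data a probability distribution on X. For every function c : X → ℝ, the infimum over probability distributions p on X of ∑_x p(x)·c(x) − ∑_x p_data(x)·c(x) + (1/2)∑_x p(x)² is at most (1/2)∑_x p_data(x)². Consequently, the supremum over c : X → ℝ of this infimum equals (1/2)∑_x p_data(x)², and it is attained at c_{ℓ2}(x) = −p_data(x). -/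
/-- With the ℓ2 regularizer `K(p) = (1/2)∑ p(x)²`, for every
discriminator `c : X → ℝ` the inner infimum over probability distributions `p`
of `∑ p(x)c(x) - ∑ p_data(x)c(x) + (1/2)∑ p(x)²` is at most
`(1/2)∑ p_data(x)²`; the supremum over `c` of this infimum equals
`(1/2)∑ p_data(x)²`, attained at `c_{ℓ2}(x) = -p_data(x)`. -/
theorem l2_strong_duality
    {X : Type*} [Fintype X] [Nonempty X]
    (p_data : X → ℝ)
    (hp_data_nonneg : ∀ x, 0 ≤ p_data x)
    (hp_data_sum : ∑ x, p_data x = 1) :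
    (∀ c : X → ℝ,
      (⨅ p : {p : X → ℝ // (∀ x, 0 ≤ p x) ∧ ∑ x, p x = 1},
          (∑ x, p.1 x * c x) - (∑ x, p_data x * c x)
            + (1 / 2) * ∑ x, (p.1 x) ^ 2)
        ≤ (1 / 2) * ∑ x, (p_data x) ^ 2) ∧
    (⨆ c : X → ℝ,
        ⨅ p : {p : X → ℝ // (∀ x, 0 ≤ p x) ∧ ∑ x, p x = 1},
          (∑ x, p.1 x * c x) - (∑ x, p_data x * c x)
            + (1 / 2) * ∑ x, (p.1 x) ^ 2)
      = (1 / 2) * ∑ x, (p_data x) ^ 2 ∧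
    (⨅ p : {p : X → ℝ // (∀ x, 0 ≤ p x) ∧ ∑ x, p x = 1},
        (∑ x, p.1 x * (-p_data x)) - (∑ x, p_data x * (-p_data x))
          + (1 / 2) * ∑ x, (p.1 x) ^ 2)
      = (1 / 2) * ∑ x, (p_data x) ^ 2 := by
  set M : ℝ := (1 / 2) * ∑ x, (p_data x) ^ 2 with hM
  haveI hne : Nonempty {p : X → ℝ // (∀ x, 0 ≤ p x) ∧ ∑ x, p x = 1} :=
    ⟨⟨p_data, hp_data_nonneg, hp_data_sum⟩⟩
  -- boundedness below of the inner objective for every c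
  have hbdd : ∀ c : X → ℝ, BddBelow (Set.range fun
      p : {p : X → ℝ // (∀ x, 0 ≤ p x) ∧ ∑ x, p x = 1} =>
        (∑ x, p.1 x * c x) - (∑ x, p_data x * c x)
          + (1 / 2) * ∑ x, (p.1 x) ^ 2) := by
    intro c
    refine ⟨Finset.univ.inf' Finset.univ_nonempty c - (∑ x, p_data x * c x), ?_⟩
    rintro _ ⟨p, rfl⟩
    have h1 : Finset.univ.inf' Finset.univ_nonempty c ≤ ∑ x, p.1 x * c x := by
      calc Finset.univ.inf' Finset.univ_nonempty c
          = ∑ x, p.1 x * Finset.univ.inf' Finset.univ_nonempty c := by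
            rw [← Finset.sum_mul, p.2.2, one_mul]
        _ ≤ ∑ x, p.1 x * c x := by
            apply Finset.sum_le_sum
            intro x _
            exact mul_le_mul_of_nonneg_left (Finset.inf'_le _ (Finset.mem_univ x)) (p.2.1 x)
    have h2 : (0:ℝ) ≤ ∑ x, (p.1 x) ^ 2 :=
      Finset.sum_nonneg fun x _ => sq_nonneg _
    simp only
    linarith
  -- part 1
  have part1 : ∀ c : X → ℝ,
      (⨅ p : {p : X → ℝ // (∀ x, 0 ≤ p x) ∧ ∑ x, p x = 1},
          (∑ x, p.1 x * c x) - (∑ x, p_data x * c x)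
            + (1 / 2) * ∑ x, (p.1 x) ^ 2) ≤ M := by
    intro c
    have := ciInf_le (hbdd c) (⟨p_data, hp_data_nonneg, hp_data_sum⟩ :
      {p : X → ℝ // (∀ x, 0 ≤ p x) ∧ ∑ x, p x = 1})
    rw [hM]
    simpa using this
  -- part 3
  have part3 : (⨅ p : {p : X → ℝ // (∀ x, 0 ≤ p x) ∧ ∑ x, p x = 1},
        (∑ x, p.1 x * (-p_data x)) - (∑ x, p_data x * (-p_data x))
          + (1 / 2) * ∑ x, (p.1 x) ^ 2) = M := by
    refine le_antisymm (part1 _) (le_ciInf fun p => ?_)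
    have key : (∑ x, p.1 x * (-p_data x)) - (∑ x, p_data x * (-p_data x))
          + (1 / 2) * ∑ x, (p.1 x) ^ 2 - M
        = (1 / 2) * ∑ x, (p.1 x - p_data x) ^ 2 := by
      rw [hM]
      simp only [Finset.mul_sum, ← Finset.sum_sub_distrib, ← Finset.sum_add_distrib]
      exact Finset.sum_congr rfl fun x _ => by ring
    have h0 : (0:ℝ) ≤ (1 / 2) * ∑ x, (p.1 x - p_data x) ^ 2 :=
      mul_nonneg (by norm_num) (Finset.sum_nonneg fun x _ => sq_nonneg _)
    linarith [key ▸ h0]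
  refine ⟨part1, ?_, part3⟩
  refine le_antisymm (ciSup_le part1) ?_
  have hub : BddAbove (Set.range fun c : X → ℝ =>
      ⨅ p : {p : X → ℝ // (∀ x, 0 ≤ p x) ∧ ∑ x, p x = 1},
        (∑ x, p.1 x * c x) - (∑ x, p_data x * c x)
          + (1 / 2) * ∑ x, (p.1 x) ^ 2) := by
    refine ⟨M, ?_⟩
    rintro _ ⟨c, rfl⟩
    exact part1 c
  have := le_ciSup hub (fun x => -p_data x)
  calc M = _ := part3.symm
    _ ≤ _ := this
end

section
/- Let X be a nonempty finite type and p_data a probability distribution on X. For every function c : X → ℝ, the minimum over probability distributions p on X of ∑_x c(x)·(p(x) − p_data(x)) equals (min_{x ∈ X} c(x)) − ∑_x p_data(x)·c(x); this value is ≤ 0, and it equals 0 if and only if c(x) = min_{x' ∈ X} c(x') for every x with p_data(x) > 0. In particular, when the regularizer K is constant, the optimal discriminator must be constant on the support of p_data and cannot discriminate data points within the support. -/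
/-- For every `c : X → ℝ`, the minimum over probability
distributions `p` of `∑ c(x)(p(x) - p_data(x))` equals
`(min_x c(x)) - ∑ p_data(x)c(x)`; this value is `≤ 0`, and it equals `0` iff
`c` is equal to its minimum value at every point of the support of `p_data`.
Hence a constant regularizer `K` induces a discriminator that is constant on
the support of `p_data`. -/
theorem constant_regularizer_degenerate_discriminator
    {X : Type*} [Fintype X] [Nonempty X]
    (p_data : X → ℝ)
    (hp_data_nonneg : ∀ x, 0 ≤ p_data x)
    (hp_data_sum : ∑ x, p_data x = 1)
    (c : X → ℝ) :
    IsLeast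
      (Set.range fun p : {p : X → ℝ // (∀ x, 0 ≤ p x) ∧ ∑ x, p x = 1} =>
        ∑ x, c x * (p.1 x - p_data x))
      (Finset.univ.inf' Finset.univ_nonempty c - ∑ x, p_data x * c x) ∧
    Finset.univ.inf' Finset.univ_nonempty c - (∑ x, p_data x * c x) ≤ 0 ∧
    (Finset.univ.inf' Finset.univ_nonempty c - (∑ x, p_data x * c x) = 0 ↔
      ∀ x, 0 < p_data x → c x = Finset.univ.inf' Finset.univ_nonempty c) := by
  classical
  set m := Finset.univ.inf' Finset.univ_nonempty c with hm
  have hmle : ∀ x, m ≤ c x := fun x => Finset.inf'_le c (Finset.mem_univ x)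
  obtain ⟨x0, -, hx0⟩ := Finset.exists_mem_eq_inf' Finset.univ_nonempty c
  have key : ∑ x, p_data x * c x - m = ∑ x, p_data x * (c x - m) := by
    simp [mul_sub, Finset.sum_sub_distrib, ← Finset.sum_mul, hp_data_sum]
  have hterm : ∀ x ∈ Finset.univ, 0 ≤ p_data x * (c x - m) := fun x _ =>
    mul_nonneg (hp_data_nonneg x) (sub_nonneg.2 (hmle x))
  have hsum_ge : m ≤ ∑ x, p_data x * c x := by
    have := Finset.sum_nonneg hterm
    linarith [key]
  refine ⟨⟨?_, ?_⟩, by linarith, ?_⟩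
  · -- membership: take p = indicator of x0
    refine ⟨⟨fun x => if x = x0 then 1 else 0, fun x => by dsimp only; split <;> norm_num, by simp⟩, ?_⟩
    have : ∑ x, c x * ((if x = x0 then (1:ℝ) else 0) - p_data x)
        = ∑ x, (c x * (if x = x0 then (1:ℝ) else 0) - c x * p_data x) := by
      simp [mul_sub]
    simp only []
    rw [this, Finset.sum_sub_distrib]
    simp [mul_ite, mul_comm]
    exact hx0.symm
  · rintro v ⟨⟨p, hp0, hp1⟩, rfl⟩
    simp only
    have h1 : ∑ x, c x * (p x - p_data x)
        = ∑ x, c x * p x - ∑ x, c x * p_data x := by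
      simp [mul_sub, Finset.sum_sub_distrib]
    have h2 : m ≤ ∑ x, c x * p x := by
      calc m = ∑ x, m * p x := by rw [← Finset.mul_sum, hp1, mul_one]
        _ ≤ ∑ x, c x * p x :=
          Finset.sum_le_sum fun x _ => mul_le_mul_of_nonneg_right (hmle x) (hp0 x)
    have h3 : ∑ x, c x * p_data x = ∑ x, p_data x * c x := by
      simp [mul_comm]
    linarith
  · constructor
    · intro h x hx
      have hz : ∑ x, p_data x * (c x - m) = 0 := by linarith [key]
      have := (Finset.sum_eq_zero_iff_of_nonneg hterm).1 hz x (Finset.mem_univ x)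
      rcases mul_eq_zero.1 this with h' | h'
      · exact absurd h' (ne_of_gt hx)
      · linarith [sub_eq_zero.1 h']
    · intro h
      have : ∑ x, p_data x * c x = ∑ x, p_data x * m := by
        apply Finset.sum_congr rfl
        intro x _
        rcases eq_or_lt_of_le (hp_data_nonneg x) with h' | h'
        · simp [← h']
        · rw [h x h']
      rw [this, ← Finset.sum_mul, hp_data_sum]
      ring
end

section
/- Let X be a nonempty finite type, m > 0, and p_data, p_gen probability distributions on X. Let c* : X → ℝ be any function satisfying c*(x) = 0 whenever p_gen(x) < p_data(x) and c*(x) = m whenever p_gen(x) > p_data(x) (c* is arbitrary where p_gen(x) = p_data(x)). Then ∑_x (p_gen(x) − p_data(x))·c*(x) = m·∑_{x : p_gen(x) > p_data(x)} (p_gen(x) − p_data(x)). Moreover, if p_gen ≠ p_data, this quantity is strictly positive. -/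
/-- For an optimal EBGAN discriminator `c*` (equal to `0` where
`p_gen < p_data`, equal to the margin `m` where `p_gen > p_data`, and
arbitrary elsewhere),
`∑ (p_gen(x) - p_data(x))·c*(x) = m·∑_{x : p_gen(x) > p_data(x)} (p_gen(x) - p_data(x))`,
and this quantity is strictly positive whenever `p_gen ≠ p_data`. -/
theorem ebgan_generator_objective_value
    {X : Type*} [Fintype X] [Nonempty X]
    (m : ℝ) (hm : 0 < m)
    (p_data p_gen : X → ℝ)
    (hp_data_nonneg : ∀ x, 0 ≤ p_data x)
    (hp_data_sum : ∑ x, p_data x = 1)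
    (hp_gen_nonneg : ∀ x, 0 ≤ p_gen x)
    (hp_gen_sum : ∑ x, p_gen x = 1)
    (cstar : X → ℝ)
    (hc0 : ∀ x, p_gen x < p_data x → cstar x = 0)
    (hcm : ∀ x, p_data x < p_gen x → cstar x = m) :
    (∑ x, (p_gen x - p_data x) * cstar x
      = m * ∑ x ∈ Finset.univ.filter (fun x => p_data x < p_gen x),
          (p_gen x - p_data x)) ∧
    (p_gen ≠ p_data → 0 < ∑ x, (p_gen x - p_data x) * cstar x) := by
  have hsumeq : ∑ x, (p_gen x - p_data x) * cstar x
      = m * ∑ x ∈ Finset.univ.filter (fun x => p_data x < p_gen x),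
          (p_gen x - p_data x) := by
    rw [Finset.mul_sum]
    rw [← Finset.sum_filter_add_sum_filter_not Finset.univ
      (fun x => p_data x < p_gen x) (fun x => (p_gen x - p_data x) * cstar x)]
    have h1 : ∑ x ∈ Finset.univ.filter (fun x => p_data x < p_gen x),
        (p_gen x - p_data x) * cstar x
        = ∑ x ∈ Finset.univ.filter (fun x => p_data x < p_gen x),
          m * (p_gen x - p_data x) := by
      apply Finset.sum_congr rfl
      intro x hx
      simp only [Finset.mem_filter] at hx
      rw [hcm x hx.2, mul_comm]
    have h2 : ∑ x ∈ Finset.univ.filter (fun x => ¬ p_data x < p_gen x),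
        (p_gen x - p_data x) * cstar x = 0 := by
      apply Finset.sum_eq_zero
      intro x hx
      simp only [Finset.mem_filter] at hx
      rcases lt_trichotomy (p_gen x) (p_data x) with h | h | h
      · rw [hc0 x h, mul_zero]
      · rw [h, sub_self, zero_mul]
      · exact absurd h hx.2
    rw [h1, h2, add_zero]
  refine ⟨hsumeq, fun hne => ?_⟩
  rw [hsumeq]
  apply mul_pos hm
  -- the set where p_data < p_gen is nonempty
  have hx : ∃ x, p_gen x ≠ p_data x := by
    by_contra h
    push_neg at h
    exact hne (funext h)
  have hnonempty : ∃ x, p_data x < p_gen x := by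
    by_contra h
    push_neg at h
    obtain ⟨x0, hx0⟩ := hx
    have hlt : p_gen x0 < p_data x0 := lt_of_le_of_ne (h x0) hx0
    have : ∑ x, p_gen x < ∑ x, p_data x :=
      Finset.sum_lt_sum (fun i _ => h i) ⟨x0, Finset.mem_univ x0, hlt⟩
    rw [hp_gen_sum, hp_data_sum] at this
    exact lt_irrefl 1 this
  obtain ⟨x0, hx0⟩ := hnonempty
  apply Finset.sum_pos
  · intro i hi
    simp only [Finset.mem_filter] at hi
    linarith [hi.2]
  · exact ⟨x0, Finset.mem_filter.mpr ⟨Finset.mem_univ x0, hx0⟩⟩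
end

section
/- Let X be a nonempty finite type, m > 0, and p_data a probability distribution on X. For each probability distribution p_gen on X, let L(p_gen) = ∑_x (p_gen(x) − p_data(x))·c*(x; p_gen), where c*(·; p_gen) : X → ℝ is any function with c*(x; p_gen) = 0 whenever p_gen(x) < p_data(x) and c*(x; p_gen) = m whenever p_gen(x) > p_data(x). Then L(p_gen) ≥ 0 for every probability distribution p_gen, and L(p_gen) = 0 if and only if p_gen = p_data. Consequently, the global optimum of the EBGAN training objective is achieved if and only if p_gen = p_data. -/
/-- With an optimal EBGAN discriminator `c*(·; p_gen)` (equal to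
`0` where `p_gen < p_data`, equal to the margin `m` where `p_gen > p_data`,
arbitrary elsewhere), the generator objective
`L(p_gen) = ∑ (p_gen(x) - p_data(x))·c*(x; p_gen)` satisfies `L(p_gen) ≥ 0`,
with `L(p_gen) = 0` iff `p_gen = p_data`.  Hence the global optimum of the
EBGAN training objective is achieved iff `p_gen = p_data`. -/
theorem ebgan_global_optimum
    {X : Type*} [Fintype X] [Nonempty X]
    (m : ℝ) (hm : 0 < m)
    (p_data : X → ℝ)
    (hp_data_nonneg : ∀ x, 0 ≤ p_data x)
    (hp_data_sum : ∑ x, p_data x = 1) :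
    ∀ p_gen : X → ℝ, (∀ x, 0 ≤ p_gen x) → (∑ x, p_gen x = 1) →
    ∀ cstar : X → ℝ,
      (∀ x, p_gen x < p_data x → cstar x = 0) →
      (∀ x, p_data x < p_gen x → cstar x = m) →
      0 ≤ ∑ x, (p_gen x - p_data x) * cstar x ∧
      ((∑ x, (p_gen x - p_data x) * cstar x) = 0 ↔ p_gen = p_data) := by
  intro p_gen hg_nonneg hg_sum cstar hlt hgt
  have hterm : ∀ x : X, 0 ≤ (p_gen x - p_data x) * cstar x := by
    intro x
    rcases lt_trichotomy (p_gen x) (p_data x) with h | h | h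
    · simp [hlt x h]
    · simp [h]
    · have := hgt x h
      rw [this]
      exact mul_nonneg (by linarith) hm.le
  refine ⟨Finset.sum_nonneg fun x _ => hterm x, ?_, ?_⟩
  · intro hsum
    have hzero : ∀ x ∈ Finset.univ, (p_gen x - p_data x) * cstar x = 0 :=
      (Finset.sum_eq_zero_iff_of_nonneg fun x _ => hterm x).mp hsum
    have hle : ∀ x, p_gen x ≤ p_data x := by
      intro x
      by_contra h
      push_neg at h
      have hc := hgt x h
      have := hzero x (Finset.mem_univ x)
      rw [hc] at this
      have : p_gen x - p_data x = 0 ∨ m = 0 := mul_eq_zero.mp this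
      rcases this with h1 | h1 <;> linarith
    funext x
    by_contra h
    have hx : p_gen x < p_data x := lt_of_le_of_ne (hle x) h
    have : ∑ y, p_gen y < ∑ y, p_data y :=
      Finset.sum_lt_sum (fun y _ => hle y) ⟨x, Finset.mem_univ x, hx⟩
    rw [hg_sum, hp_data_sum] at this
    exact lt_irrefl 1 this
  · intro h
    subst h
    simp
end

section
/- Let f : ℝ → ℝ be convex and differentiable, and suppose its convex conjugate f★(t) = sup_{u ∈ ℝ} (t·u − f(u)) is finite for all t ∈ ℝ. Fix real numbers a > 0 and b ≥ 0, set r = b / a and c₀ = f′(r). Then: (i) f★(c₀) = c₀·r − f(r) (the Fenchel–Young inequality holds with equality at (r, c₀)); and (ii) for every c ∈ ℝ, b·c − a·f★(c) ≤ b·c₀ − a·f★(c₀) = a·f(r). In other words, taking a = p_gen(x) and b = p_data(x), the pointwise f-GAN discriminator objective c ↦ p_data(x)·c − p_gen(x)·f★(c) is maximized at c*(x) = f′(p_data(x)/p_gen(x)). -/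
/-- Pointwise f-GAN discriminator optimality.  Let `f` be convex
and differentiable with everywhere-finite convex conjugate
`f★(t) = sup_u (t·u - f(u))` (expressed via `IsLUB`).  For `a > 0`, `b ≥ 0`,
`r = b / a`, `c₀ = f′(r)`:
(i) Fenchel–Young holds with equality: `f★(c₀) = c₀·r - f(r)`;
(ii) for every `c`, `b·c - a·f★(c) ≤ b·c₀ - a·f★(c₀) = a·f(r)`. -/
theorem fgan_pointwise_optimal_discriminator
    (f : ℝ → ℝ) (hf_conv : ConvexOn ℝ Set.univ f)
    (hf_diff : Differentiable ℝ f)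
    (fstar : ℝ → ℝ)
    (hfstar : ∀ t, IsLUB (Set.range fun u => t * u - f u) (fstar t))
    (a b : ℝ) (ha : 0 < a) (hb : 0 ≤ b)
    (r c₀ : ℝ) (hr : r = b / a) (hc₀ : c₀ = deriv f r) :
    fstar c₀ = c₀ * r - f r ∧
    (∀ c : ℝ, b * c - a * fstar c ≤ b * c₀ - a * fstar c₀) ∧
    b * c₀ - a * fstar c₀ = a * f r := by
  have hbar : b = a * r := by rw [hr]; field_simp
  -- gradient inequality: ∀ u, c₀ * u - f u ≤ c₀ * r - f r
  have hgrad : ∀ u : ℝ, c₀ * u - f u ≤ c₀ * r - f r := by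
    intro u
    rcases lt_trichotomy u r with h | h | h
    · have := hf_conv.slope_le_deriv (Set.mem_univ u) (Set.mem_univ r) h
        (hf_diff r)
      rw [slope_def_field, ← hc₀, div_le_iff₀ (by linarith)] at this
      nlinarith [mul_le_mul_of_nonneg_left this ha.le]
    · simp [h]
    · have := hf_conv.deriv_le_slope (Set.mem_univ r) (Set.mem_univ u) h
        (hf_diff r)
      rw [slope_def_field, ← hc₀, le_div_iff₀ (by linarith)] at this
      nlinarith [mul_le_mul_of_nonneg_left this ha.le]
  -- Fenchel-Young inequality: ∀ t, t * r - f r ≤ fstar t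
  have hFY : ∀ t : ℝ, t * r - f r ≤ fstar t := fun t =>
    (hfstar t).1 ⟨r, rfl⟩
  have heq : fstar c₀ = c₀ * r - f r := by
    refine le_antisymm ?_ (hFY c₀)
    exact (hfstar c₀).2 (by rintro x ⟨u, rfl⟩; exact hgrad u)
  have hval : b * c₀ - a * fstar c₀ = a * f r := by
    rw [heq, hbar]; ring
  refine ⟨heq, fun c => ?_, hval⟩
  rw [hval]
  have := hFY c
  rw [hbar]; nlinarith [mul_le_mul_of_nonneg_left this ha.le]
end
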